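/- Let π > 0 and define g_π : ℝ³ →(−∞, +∞] by g_π(v) = 4/√(s(v)) + π √(s(v)) for v ≠ 0, where s(v) = |v| √(4|v| + π²|v|⁴) − π|v|³ > 0, and g_π(0) = +∞. Then: (i) g_π(v) > 3√(2π) for every v ≠ 0; and (ii) every convex function φ : ℝ³ → ℝ with φ(v) ≤ g_π(v) for all v ≠ 0 satisfies φ(v) ≤ 3√(2π) for every v ∈ ℝ³. In particular, the pointwise supremum over all convex minorants of g_π is the constant function 3√(2π). -/

import Mathlib

noncomputable section

/-- The Euclidean norm on `ℝ³`. -/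
def enr (v : Fin 3 → ℝ) : ℝ := Real.sqrt (∑ i, (v i) ^ 2)

/-- The quantity `s(v) = |v|√(4|v| + π²|v|⁴) − π|v|³`. -/
def sfun (π : ℝ) (v : Fin 3 → ℝ) : ℝ :=
  enr v * Real.sqrt (4 * enr v + π ^ 2 * (enr v) ^ 4) - π * (enr v) ^ 3

/-- The (finite part of the) function `g_π(v) = 4/√(s(v)) + π√(s(v))` for `v ≠ 0`. -/
def gval (π : ℝ) (v : Fin 3 → ℝ) : ℝ :=
  4 / Real.sqrt (sfun π v) + π * Real.sqrt (sfun π v)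


/-!
Rationalizing, `s(v) = 4 / (√(4/|v|³ + π²) + π)`, which lies in `(0, 2/π)` and tends to `2/π`
as `|v| → ∞`. With `b = √(2π)` and `u = √s`, one has `4/u + πu - 3b = (2 - bu)(4 - bu)/(2u)`,
and `bu < 2` exactly when `s < 2/π`; so `g_π > 3√(2π)` and `g_π → 3√(2π)` at infinity. A convex
`φ ≤ g_π` satisfies `φ(v) ≤ (g_π(v + te) + g_π(v - te))/2` for every `t ≠ 0`, and letting
`t → ∞` gives `φ(v) ≤ 3√(2π)`.
-/

open Filter Topology Bornology Set

lemma tendsto_smul_const_cobounded {𝕜 E : Type*} [NormedField 𝕜] [NormedAddCommGroup E]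
    [NormedSpace 𝕜 E] {e : E} (he : e ≠ 0) :
    Tendsto (fun t : 𝕜 => t • e) (cobounded 𝕜) (cobounded E) := by
  rw [← tendsto_norm_atTop_iff_cobounded]
  simp_rw [norm_smul]
  exact tendsto_norm_cobounded_atTop.atTop_mul_const (norm_pos_iff.2 he)

theorem ConvexOn.le_of_tendsto_cobounded {E : Type*} [NormedAddCommGroup E] [NormedSpace ℝ E]
    [Nontrivial E] {φ f : E → ℝ} {c : ℝ} (hφ : ConvexOn ℝ univ φ)
    (hφf : ∀ᶠ w in cobounded E, φ w ≤ f w) (hf : Tendsto f (cobounded E) (𝓝 c)) (x : E) :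
    φ x ≤ c := by
  obtain ⟨e, he⟩ := exists_ne (0 : E)
  have hline : Tendsto (fun t : ℝ => x + t • e) (cobounded ℝ) (cobounded E) :=
    (tendsto_const_add_cobounded x).comp (tendsto_smul_const_cobounded he)
  have hline' : Tendsto (fun t : ℝ => x + (-t) • e) (cobounded ℝ) (cobounded E) :=
    hline.comp tendsto_neg_cobounded
  have hmid (t : ℝ) : φ x ≤ (φ (x + t • e) + φ (x + (-t) • e)) / 2 := by
    have h := hφ.2 (mem_univ (x + t • e)) (mem_univ (x + (-t) • e)) (by norm_num : (0 : ℝ) ≤ 1 / 2)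
      (by norm_num : (0 : ℝ) ≤ 1 / 2) (by norm_num)
    rw [show (1 / 2 : ℝ) • (x + t • e) + (1 / 2 : ℝ) • (x + (-t) • e) = x by module,
      smul_eq_mul, smul_eq_mul] at h
    linarith
  have hlim := ((hf.comp hline).add (hf.comp hline')).div_const 2
  rw [add_self_div_two] at hlim
  refine ge_of_tendsto hlim ?_
  filter_upwards [hline.eventually hφf, hline'.eventually hφf] with t h₁ h₂
  simp only [Function.comp_apply]
  linarith [hmid t]

lemma norm_le_enr (v : Fin 3 → ℝ) : ‖v‖ ≤ enr v :=
  (pi_norm_le_iff_of_nonneg (Real.sqrt_nonneg _)).2 fun i =>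
    Real.abs_le_sqrt (Finset.single_le_sum (fun j _ => sq_nonneg (v j)) (Finset.mem_univ i))

lemma enr_pos {v : Fin 3 → ℝ} (hv : v ≠ 0) : 0 < enr v :=
  (norm_pos_iff.2 hv).trans_le (norm_le_enr v)

lemma tendsto_enr_cobounded : Tendsto enr (cobounded (Fin 3 → ℝ)) atTop :=
  tendsto_atTop_mono norm_le_enr tendsto_norm_cobounded_atTop

def sRadial (π r : ℝ) : ℝ := r * √(4 * r + π ^ 2 * r ^ 4) - π * r ^ 3

def gProfile (π s : ℝ) : ℝ := 4 / √s + π * √s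

lemma sRadial_eq {π r : ℝ} (hπ : 0 ≤ π) (hr : 0 < r) :
    sRadial π r = 4 / (√(4 / r ^ 3 + π ^ 2) + π) := by
  set Q := √(4 / r ^ 3 + π ^ 2)
  have hQ : r ^ 3 * Q ^ 2 = 4 + π ^ 2 * r ^ 3 := by
    rw [Real.sq_sqrt (by positivity)]; field_simp
  have hroot : √(4 * r + π ^ 2 * r ^ 4) = r ^ 2 * Q := by
    rw [show 4 * r + π ^ 2 * r ^ 4 = (r ^ 2) ^ 2 * (4 / r ^ 3 + π ^ 2) by field_simp,
      Real.sqrt_mul (by positivity), Real.sqrt_sq (by positivity)]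
  have hden : 0 < Q + π := by positivity
  rw [sRadial, hroot, eq_div_iff hden.ne']
  linear_combination hQ

lemma sRadial_pos {π r : ℝ} (hπ : 0 ≤ π) (hr : 0 < r) : 0 < sRadial π r := by
  rw [sRadial_eq hπ hr]; positivity

lemma sRadial_lt {π r : ℝ} (hπ : 0 < π) (hr : 0 < r) : sRadial π r < 2 / π := by
  have hQ : π < √(4 / r ^ 3 + π ^ 2) :=
    Real.lt_sqrt_of_sq_lt (lt_add_of_pos_left _ (by positivity))
  rw [sRadial_eq hπ.le hr, div_lt_div_iff₀ (by positivity) hπ]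
  linarith

lemma tendsto_sRadial_atTop {π : ℝ} (hπ : 0 < π) :
    Tendsto (sRadial π) atTop (𝓝 (2 / π)) := by
  have h : Tendsto (fun r : ℝ => 4 / (√(4 / r ^ 3 + π ^ 2) + π)) atTop
      (𝓝 (4 / (√(0 + π ^ 2) + π))) := by
    refine Tendsto.div tendsto_const_nhds (Tendsto.add ?_ tendsto_const_nhds) (by positivity)
    exact (Real.continuous_sqrt.tendsto _).comp
      ((tendsto_const_nhds.div_atTop (tendsto_pow_atTop three_ne_zero)).add tendsto_const_nhds)
  rw [zero_add, Real.sqrt_sq hπ.le, ← two_mul, show (4 : ℝ) / (2 * π) = 2 / π by ring] at h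
  refine h.congr' ?_
  filter_upwards [eventually_gt_atTop 0] with r hr
  exact (sRadial_eq hπ.le hr).symm

lemma gProfile_sub_three_mul_sqrt {π s : ℝ} (hπ : 0 ≤ π) (hs : 0 < s) :
    gProfile π s - 3 * √(2 * π) = (2 - √(2 * π) * √s) * (4 - √(2 * π) * √s) / (2 * √s) := by
  have hu : 0 < √s := Real.sqrt_pos.2 hs
  have hb : √(2 * π) ^ 2 = 2 * π := Real.sq_sqrt (by positivity)
  unfold gProfile
  generalize √(2 * π) = b at hb ⊢
  field_simp
  linear_combination (-(√s) ^ 2) * hb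

lemma three_mul_sqrt_lt_gProfile {π s : ℝ} (hπ : 0 < π) (hs : 0 < s) (hs' : s < 2 / π) :
    3 * √(2 * π) < gProfile π s := by
  have hbu : √(2 * π) * √s < 2 := by
    rw [← Real.sqrt_mul (by positivity), Real.sqrt_lt' two_pos]
    nlinarith [(lt_div_iff₀ hπ).1 hs']
  have key := gProfile_sub_three_mul_sqrt hπ.le hs
  have : 0 < (2 - √(2 * π) * √s) * (4 - √(2 * π) * √s) / (2 * √s) :=
    div_pos (mul_pos (by linarith) (by linarith)) (by positivity)
  linarith

lemma gProfile_two_div {π : ℝ} (hπ : 0 < π) : gProfile π (2 / π) = 3 * √(2 * π) := by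
  have hbu : √(2 * π) * √(2 / π) = 2 := by
    rw [← Real.sqrt_mul (by positivity), show 2 * π * (2 / π) = 2 ^ 2 by field_simp,
      Real.sqrt_sq two_pos.le]
  have key := gProfile_sub_three_mul_sqrt hπ.le (div_pos two_pos hπ)
  rw [hbu, sub_self, zero_mul, zero_div] at key
  linarith

lemma tendsto_gval_cobounded {π : ℝ} (hπ : 0 < π) :
    Tendsto (gval π) (cobounded (Fin 3 → ℝ)) (𝓝 (3 * √(2 * π))) := by
  have hcont : ContinuousAt (gProfile π) (2 / π) := by
    unfold gProfile
    have : √(2 / π) ≠ 0 := (Real.sqrt_pos.2 (by positivity)).ne'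
    fun_prop (disch := assumption)
  rw [← gProfile_two_div hπ]
  exact hcont.tendsto.comp ((tendsto_sRadial_atTop hπ).comp tendsto_enr_cobounded)

lemma sfun_pos {π : ℝ} (hπ : 0 < π) {v : Fin 3 → ℝ} (hv : v ≠ 0) : 0 < sfun π v :=
  sRadial_pos hπ.le (enr_pos hv)

lemma three_mul_sqrt_lt_gval {π : ℝ} (hπ : 0 < π) {v : Fin 3 → ℝ} (hv : v ≠ 0) :
    3 * √(2 * π) < gval π v :=
  three_mul_sqrt_lt_gProfile hπ (sfun_pos hπ hv) (sRadial_lt hπ (enr_pos hv))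

lemma le_of_convexOn_le_gval {π : ℝ} (hπ : 0 < π) {φ : (Fin 3 → ℝ) → ℝ}
    (hφ : ConvexOn ℝ univ φ) (hle : ∀ v, v ≠ 0 → φ v ≤ gval π v) (v : Fin 3 → ℝ) :
    φ v ≤ 3 * √(2 * π) :=
  hφ.le_of_tendsto_cobounded ((eventually_ne_cobounded 0).mono hle) (tendsto_gval_cobounded hπ) v

/-- For `π > 0`: `s(v) > 0` and `g_π(v) > 3√(2π)` for `v ≠ 0`; every convex minorant of `g_π`
is everywhere `≤ 3√(2π)`; and the pointwise supremum of the convex minorants of `g_π` is the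
constant `3√(2π)` (which is itself a convex minorant, `g_π(0) = +∞` imposing no constraint). -/
theorem stmt14 (π : ℝ) (hπ : 0 < π) :
    (∀ v : Fin 3 → ℝ, v ≠ 0 → 0 < sfun π v) ∧
    (∀ v : Fin 3 → ℝ, v ≠ 0 → 3 * Real.sqrt (2 * π) < gval π v) ∧
    (∀ φ : (Fin 3 → ℝ) → ℝ, ConvexOn ℝ Set.univ φ →
      (∀ v : Fin 3 → ℝ, v ≠ 0 → φ v ≤ gval π v) →
      ∀ v : Fin 3 → ℝ, φ v ≤ 3 * Real.sqrt (2 * π)) ∧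
    (∀ v : Fin 3 → ℝ,
      IsGreatest
        {y : ℝ | ∃ φ : (Fin 3 → ℝ) → ℝ, ConvexOn ℝ Set.univ φ ∧
          (∀ w : Fin 3 → ℝ, w ≠ 0 → φ w ≤ gval π w) ∧ y = φ v}
        (3 * Real.sqrt (2 * π))) := by
  refine ⟨fun v => sfun_pos hπ, fun v => three_mul_sqrt_lt_gval hπ,
    fun φ hφ hle => le_of_convexOn_le_gval hπ hφ hle, fun v => ⟨?_, ?_⟩⟩
  · exact ⟨fun _ => 3 * √(2 * π), convexOn_const _ convex_univ,
      fun w hw => (three_mul_sqrt_lt_gval hπ hw).le, rfl⟩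
  · rintro y ⟨φ, hφ, hle, rfl⟩
    exact le_of_convexOn_le_gval hπ hφ hle v
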